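/- Consider n ≥ 1 anonymous stations running the same deterministic algorithm on a synchronous beeping channel, modeled as follows: there is a state space S, a common initial state s₀ : S, an output function β : S → Bool (whether a station beeps in the current round), and a transition function δ : S → Bool → S, where the Boolean feedback a station receives in a round is the disjunction (OR), over all stations, of their outputs in that round. Formally, the state σ j t of station j : Fin n at round t satisfies σ j 0 = s₀ and σ j (t+1) = δ (σ j t) (decide (∃ j', β (σ j' t) = true)). Then for every round t and all stations j, j', we have σ j t = σ j' t. Consequently, for any name-assignment function ν : S → ℕ applied at any round t, all stations receive the same name; in particular, if n ≥ 2, no deterministic algorithm assigns distinct names to all stations. -/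
import Mathlib

/-- `n ≥ 1` anonymous stations running the same deterministic algorithm on a synchronous
beeping channel remain in identical states forever; consequently any name assignment gives
all stations the same name, and for `n ≥ 2` no deterministic algorithm assigns distinct
names to all stations. -/
theorem stmt2 {S : Type*} (n : ℕ) (hn : 1 ≤ n) (s₀ : S) (β : S → Bool) (δ : S → Bool → S)
    (σ : Fin n → ℕ → S)
    (h0 : ∀ j : Fin n, σ j 0 = s₀)
    (hstep : ∀ (j : Fin n) (t : ℕ),
      σ j (t + 1) = δ (σ j t) (decide (∃ j' : Fin n, β (σ j' t) = true))) :
    (∀ (t : ℕ) (j j' : Fin n), σ j t = σ j' t) ∧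
    (∀ (ν : S → ℕ) (t : ℕ),
      (∀ j j' : Fin n, ν (σ j t) = ν (σ j' t)) ∧
      (2 ≤ n → ¬ Function.Injective (fun j : Fin n => ν (σ j t)))) := by
  have key : ∀ (t : ℕ) (j j' : Fin n), σ j t = σ j' t := by
    intro t
    induction t with
    | zero => intro j j'; rw [h0, h0]
    | succ t ih => intro j j'; rw [hstep, hstep, ih j j']
  refine ⟨key, fun ν t => ⟨fun j j' => by rw [key t j j'], fun h2 hinj => ?_⟩⟩
  have h01 : (⟨0, by omega⟩ : Fin n) = ⟨1, by omega⟩ := by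
    apply hinj; simp only; rw [key t]
  simp [Fin.ext_iff] at h01
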